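/- arXiv:1705.03240 — 3 statements merged into one kernel-verified Lean document; each statement's English description precedes it below -/
import Mathlib

section
/- Let k ≥ 1, let z₁ ≠ z₂ and p₁ ≠ p₂ be four pairwise distinct complex numbers, and let c ∈ ℂ*. Consider the k-differential ξ = c·(z−z₂)(z−z₁)^{−1}(z−p₁)^{−k}(z−p₂)^{−k}(dz)^k on ℙ¹ (of type (1,−1;−k,−k)). Its k-residues at p₁ and p₂ are R_i = c·(p_i−z₂)(p_i−z₁)^{−1}(p_i−p_j)^{−k} (where {i,j}={1,2}). Then R₁ ≠ (−1)^k R₂. Equivalently, (p₁−z₂)(p₂−z₁) ≠ (p₂−z₂)(p₁−z₁) for pairwise distinct z₁,z₂,p₁,p₂. -/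
/-- For `k ≥ 1`, pairwise distinct `z₁, z₂, p₁, p₂ ∈ ℂ` and `c ∈ ℂ*`, the `k`-residues
`R_i = c (p_i - z₂)(p_i - z₁)⁻¹ (p_i - p_j)^{-k}` of the `k`-differential
`c (z-z₂)(z-z₁)⁻¹(z-p₁)^{-k}(z-p₂)^{-k} (dz)^k` at its two poles `p₁, p₂` of order `k`
satisfy `R₁ ≠ (-1)^k R₂`. -/
theorem k_residues_type_one_minus_one (k : ℕ) (hk : 1 ≤ k) (z₁ z₂ p₁ p₂ : ℂ)
    (h12 : z₁ ≠ z₂) (hz1p1 : z₁ ≠ p₁) (hz1p2 : z₁ ≠ p₂)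
    (hz2p1 : z₂ ≠ p₁) (hz2p2 : z₂ ≠ p₂) (hp : p₁ ≠ p₂)
    (c : ℂ) (hc : c ≠ 0) :
    c * (p₁ - z₂) * (p₁ - z₁)⁻¹ * ((p₁ - p₂) ^ k)⁻¹ ≠
      (-1) ^ k * (c * (p₂ - z₂) * (p₂ - z₁)⁻¹ * ((p₂ - p₁) ^ k)⁻¹) := by
  have hpp : p₁ - p₂ ≠ 0 := sub_ne_zero.mpr hp
  have hpp' : p₂ - p₁ ≠ 0 := sub_ne_zero.mpr hp.symm
  have h1 : p₁ - z₁ ≠ 0 := sub_ne_zero.mpr (fun h => hz1p1 (by linear_combination -h))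
  have h2 : p₂ - z₁ ≠ 0 := sub_ne_zero.mpr (fun h => hz1p2 (by linear_combination -h))
  intro h
  have key : (p₁ - z₂) * (p₂ - z₁) = (p₂ - z₂) * (p₁ - z₁) := by
    have hpow : ((-1 : ℂ)) ^ k * ((p₂ - p₁) ^ k)⁻¹ = ((p₁ - p₂) ^ k)⁻¹ := by
      rw [show p₂ - p₁ = -(p₁ - p₂) by ring, neg_pow (p₁ - p₂), mul_inv, ← mul_assoc,
        mul_inv_cancel₀ (pow_ne_zero k (neg_ne_zero.mpr (one_ne_zero : (1:ℂ) ≠ 0))), one_mul]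
    have h' : c * (p₁ - z₂) * (p₂ - z₁) * ((p₁ - p₂) ^ k)⁻¹ =
        c * (p₂ - z₂) * (p₁ - z₁) * ((p₁ - p₂) ^ k)⁻¹ := by
      have e1 : c * (p₁ - z₂) * (p₁ - z₁)⁻¹ * ((p₁ - p₂) ^ k)⁻¹ * ((p₁ - z₁) * (p₂ - z₁)) =
          c * (p₁ - z₂) * (p₂ - z₁) * ((p₁ - p₂) ^ k)⁻¹ := by
        field_simp
      have e2 : (-1 : ℂ) ^ k * (c * (p₂ - z₂) * (p₂ - z₁)⁻¹ * ((p₂ - p₁) ^ k)⁻¹) *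
          ((p₁ - z₁) * (p₂ - z₁)) = c * (p₂ - z₂) * (p₁ - z₁) * ((p₁ - p₂) ^ k)⁻¹ := by
        rw [← hpow]; field_simp
      rw [← e1, ← e2, h]
    have := mul_right_cancel₀ (inv_ne_zero (pow_ne_zero k hpp)) h'
    have hcancel := mul_left_cancel₀ hc (by linear_combination this :
      c * ((p₁ - z₂) * (p₂ - z₁)) = c * ((p₂ - z₂) * (p₁ - z₁)))
    exact hcancel
  have : (p₂ - p₁) * (z₁ - z₂) = 0 := by linear_combination key
  rcases mul_eq_zero.mp this with h' | h'
  · exact hpp' h'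
  · exact h12 (sub_eq_zero.mp h')
end

section
/- Three complex numbers R₁, R₂, R₃ are triangular (i.e. there exist complex square roots r_i with r_i² = R_i for i = 1,2,3 and r₁ + r₂ + r₃ = 0) if and only if R₁² + R₂² + R₃² = 2(R₁R₂ + R₂R₃ + R₃R₁). -/
/-- Three complex numbers `R₁, R₂, R₃` are triangular — i.e. there exist square roots
`rᵢ` with `rᵢ² = Rᵢ` and `r₁ + r₂ + r₃ = 0` — if and only if
`R₁² + R₂² + R₃² = 2(R₁R₂ + R₂R₃ + R₃R₁)`. -/
theorem triangular_iff (R₁ R₂ R₃ : ℂ) :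
    (∃ r₁ r₂ r₃ : ℂ, r₁ ^ 2 = R₁ ∧ r₂ ^ 2 = R₂ ∧ r₃ ^ 2 = R₃ ∧ r₁ + r₂ + r₃ = 0) ↔
      R₁ ^ 2 + R₂ ^ 2 + R₃ ^ 2 = 2 * (R₁ * R₂ + R₂ * R₃ + R₃ * R₁) := by
  constructor
  · rintro ⟨r₁, r₂, r₃, rfl, rfl, rfl, h⟩
    have h3 : r₃ = -(r₁ + r₂) := by linear_combination h
    subst h3
    ring
  · intro h
    obtain ⟨r₁, h1⟩ : ∃ z : ℂ, z ^ 2 = R₁ := IsAlgClosed.exists_pow_nat_eq R₁ two_pos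
    obtain ⟨r₂, h2⟩ : ∃ z : ℂ, z ^ 2 = R₂ := IsAlgClosed.exists_pow_nat_eq R₂ two_pos
    have key : (R₃ - R₁ - R₂) ^ 2 = (2 * r₁ * r₂) ^ 2 := by
      have : (2 * r₁ * r₂) ^ 2 = 4 * R₁ * R₂ := by rw [← h1, ← h2]; ring
      rw [this]; linear_combination h
    rcases sq_eq_sq_iff_eq_or_eq_neg.mp key with hc | hc
    · exact ⟨r₁, r₂, -(r₁ + r₂), h1, h2, by linear_combination h1 + h2 - hc, by ring⟩
    · exact ⟨r₁, -r₂, -(r₁ - r₂), h1, by rw [← h2]; ring,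
        by linear_combination h1 + h2 - hc, by ring⟩
end

section
/- Let x₁, …, x_a and y₁, …, y_b be strictly positive real numbers with ∑ x_i = ∑ y_j. If there is no connection graph with the x_i as weights on one side and the y_j as weights on the other, then all the numbers x₁,…,x_a,y₁,…,y_b are pairwise commensurable (each ratio x_i/x_j, x_i/y_j, y_i/y_j is rational). -/
/-- One step of the leaf-removal operation on a weighted graph state.  A state is a pair
`(s, w)` of the set of remaining vertices and the current weight function.  A step removes a
leaf `v` of the graph induced on `s` (a vertex with a unique neighbour `u` in `s`) and
subtracts the weight of `v` from that of `u`. -/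
def LeafStep {V : Type} [DecidableEq V] (G : SimpleGraph V) :
    Finset V × (V → ℝ) → Finset V × (V → ℝ) → Prop := fun st st' =>
  ∃ v ∈ st.1, ∃ u ∈ st.1, u ≠ v ∧ G.Adj v u ∧ (∀ x ∈ st.1, G.Adj v x → x = u) ∧
    st'.1 = st.1.erase v ∧ st'.2 = Function.update st.2 u (st.2 u - st.2 v)

/-- `ReachN G n st st'` : the state `st'` is obtained from `st` by exactly `n` leaf-removal
steps. -/
def ReachN {V : Type} [DecidableEq V] (G : SimpleGraph V) :
    ℕ → Finset V × (V → ℝ) → Finset V × (V → ℝ) → Prop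
  | 0, st, st' => st' = st
  | n + 1, st, st' => ∃ m, LeafStep G st m ∧ ReachN G n m st'

/-- A connection graph with weights `x : Fin a → ℝ` on the positive side and
`y : Fin b → ℝ` on the negative side: a bipartite tree on `Fin a ⊕ Fin b` with strictly
positive weights whose two sides have equal total weight, and such that applying between `1`
and (#edges − 1) = `a + b - 2` leaf-removal steps always leaves all remaining weights
strictly positive. -/
def IsConnectionGraph {a b : ℕ} (G : SimpleGraph (Fin a ⊕ Fin b))
    (x : Fin a → ℝ) (y : Fin b → ℝ) : Prop :=
  G.IsTree ∧
  (∀ i j, ¬ G.Adj (Sum.inl i) (Sum.inl j)) ∧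
  (∀ i j, ¬ G.Adj (Sum.inr i) (Sum.inr j)) ∧
  (∀ i, 0 < x i) ∧ (∀ j, 0 < y j) ∧
  (∑ i, x i = ∑ j, y j) ∧
  (∀ n : ℕ, 1 ≤ n → n ≤ a + b - 2 →
    ∀ st, ReachN G n (Finset.univ, Sum.elim x y) st → ∀ v ∈ st.1, 0 < st.2 v)

/-!
If some weight is not a rational multiple of `S = ∑ xᵢ`, a `ℚ`-linear functional `f : ℝ → ℚ`
kills `S` but not all the weights. Lay the `xᵢ` end to end on `[0, S]` in order of decreasing
`f`-value and the `yⱼ` in order of increasing `f`-value: then `f` is positive at the interior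
cut points of the `x`-side and nonpositive at those of the `y`-side, so the two sides share no
interior cut point. Join an `x`-segment to a `y`-segment when they overlap. Every segment not
starting at `0` meets exactly one earlier-starting segment of the other side, so this graph is a
tree. Weighting each edge by the length of the overlap, every vertex weight is the sum of its
edge weights, and removing a leaf preserves this as well as connectivity, so the weights stay
positive as long as two vertices remain.
-/

open Finset

section PrefixSum

variable {M : Type*} {n : ℕ}

def prefixSum [AddCommMonoid M] (w : Fin n → M) (k : ℕ) : M := ∑ i : Fin n with i.val < k, w i

section AddCommMonoid

variable [AddCommMonoid M] (w : Fin n → M)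

@[simp]
lemma prefixSum_zero : prefixSum w 0 = 0 := by
  simp [prefixSum]

lemma prefixSum_of_le {k : ℕ} (hk : n ≤ k) : prefixSum w k = ∑ i, w i := by
  rw [prefixSum, filter_true_of_mem fun i _ => i.isLt.trans_le hk]

lemma prefixSum_succ (i : Fin n) : prefixSum w (i + 1) = prefixSum w i + w i := by
  have : univ.filter (fun j : Fin n => j.val < i + 1) =
      insert i (univ.filter fun j : Fin n => j.val < i) := by
    ext j
    simp only [mem_filter, mem_univ, true_and, mem_insert, Fin.ext_iff]
    omega
  rw [prefixSum, this, sum_insert (by simp), add_comm, prefixSum]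

lemma prefixSum_add_sum_not_lt (k : ℕ) :
    prefixSum w k + ∑ i : Fin n with ¬i.val < k, w i = ∑ i, w i :=
  sum_filter_add_sum_filter_not _ _ _

lemma map_prefixSum {N F : Type*} [AddCommMonoid N] [FunLike F M N] [AddMonoidHomClass F M N]
    (f : F) (k : ℕ) : f (prefixSum w k) = prefixSum (f ∘ w) k :=
  map_sum f _ _

lemma prefixSum_mono [PartialOrder M] [IsOrderedAddMonoid M] {w : Fin n → M} (hw : 0 ≤ w) :
    Monotone (prefixSum w) := fun _ _ hkl =>
  sum_le_sum_of_subset_of_nonneg (fun i hi => by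
      simp only [mem_filter] at hi ⊢
      exact ⟨hi.1, hi.2.trans_le hkl⟩) fun i _ _ => hw i

end AddCommMonoid

lemma prefixSum_neg [AddCommGroup M] (w : Fin n → M) (k : ℕ) :
    prefixSum (-w) k = -prefixSum w k :=
  sum_neg_distrib _

section Antitone

variable [AddCommGroup M] [LinearOrder M] [IsOrderedAddMonoid M] {r : Fin n → M}

lemma prefixSum_nonneg_of_antitone (hr : Antitone r) (hsum : ∑ i, r i = 0) (k : ℕ) :
    0 ≤ prefixSum r k := by
  rcases le_or_gt n k with hk | hk
  · rw [prefixSum_of_le r hk, hsum]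
  set j : Fin n := ⟨k, hk⟩
  rcases le_or_gt (r j) 0 with hj | hj
  · have htail : ∑ i : Fin n with ¬i.val < k, r i ≤ 0 :=
      sum_nonpos fun i hi => (hr (show j ≤ i from not_lt.1 (mem_filter.1 hi).2)).trans hj
    rw [eq_neg_of_add_eq_zero_left ((prefixSum_add_sum_not_lt r k).trans hsum)]
    exact neg_nonneg.2 htail
  · exact sum_nonneg fun i hi => hj.le.trans (hr (show i ≤ j from (mem_filter.1 hi).2.le))

lemma eq_zero_of_prefixSum_eq_zero (hr : Antitone r) (hsum : ∑ i, r i = 0) {k : ℕ}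
    (hk0 : 0 < k) (hk : k < n) (h : prefixSum r k = 0) : r = 0 := by
  set j : Fin n := ⟨k, hk⟩
  have hj : r j ≤ 0 := by
    by_contra! hj
    refine (sum_pos (fun i hi => hj.trans_le (hr ?_)) ⟨⟨0, hk0.trans hk⟩, ?_⟩).ne' h
    · exact (show i ≤ j from (mem_filter.1 hi).2.le)
    · simpa using hk0
  have htail : ∀ i : Fin n, ¬i.val < k → r i = 0 := by
    have hnonpos : ∀ i ∈ ({i | ¬i.val < k} : Finset (Fin n)), r i ≤ 0 :=
      fun i hi => (hr (show j ≤ i from not_lt.1 (mem_filter.1 hi).2)).trans hj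
    have := (prefixSum_add_sum_not_lt r k).trans hsum
    rw [h, zero_add, sum_eq_zero_iff_of_nonpos hnonpos] at this
    exact fun i hi => this i (by simpa using hi)
  have hhead : ∀ i : Fin n, i.val < k → r i = 0 := by
    have hnonneg : ∀ i ∈ ({i | i.val < k} : Finset (Fin n)), 0 ≤ r i := fun i hi =>
      (htail j (lt_irrefl k)).symm.le.trans (hr (show i ≤ j from (mem_filter.1 hi).2.le))
    rw [prefixSum, sum_eq_zero_iff_of_nonneg hnonneg] at h
    exact fun i hi => h i (by simpa using hi)
  funext i
  by_cases hi : i.val < k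
  exacts [hhead i hi, htail i hi]

end Antitone

end PrefixSum

lemma exists_apply_le_lt_apply_succ {α : Type*} [LinearOrder α] (F : ℕ → α) {t : α}
    (h0 : F 0 ≤ t) {n : ℕ} (hn : t < F n) : ∃ k < n, F k ≤ t ∧ t < F (k + 1) := by
  induction n with
  | zero => exact absurd h0 hn.not_ge
  | succ n ih =>
    rcases le_or_gt (F n) t with h | h
    · exact ⟨n, n.lt_succ_self, h, hn⟩
    · obtain ⟨k, hk, hFk⟩ := ih h
      exact ⟨k, hk.trans n.lt_succ_self, hFk⟩

lemma max_zero_min_sub_max {l h c d : ℝ} (hlh : l ≤ h) (hcd : c ≤ d) :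
    max 0 (min h d - max l c) = max l (min h d) - max l (min h c) := by
  simp only [max_def, min_def]
  split_ifs <;> linarith

section Segments

variable {n : ℕ} {w : Fin n → ℝ} {σ : Equiv.Perm (Fin n)}

def segStart (w : Fin n → ℝ) (σ : Equiv.Perm (Fin n)) (i : Fin n) : ℝ :=
  prefixSum (w ∘ σ) (σ.symm i)

def segEnd (w : Fin n → ℝ) (σ : Equiv.Perm (Fin n)) (i : Fin n) : ℝ :=
  prefixSum (w ∘ σ) (σ.symm i + 1)

lemma segEnd_eq_segStart_add (w : Fin n → ℝ) (σ : Equiv.Perm (Fin n)) (i : Fin n) :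
    segEnd w σ i = segStart w σ i + w i := by
  simp [segEnd, segStart, prefixSum_succ]

lemma segStart_lt_segEnd (hw : ∀ i, 0 < w i) (i : Fin n) : segStart w σ i < segEnd w σ i := by
  simpa [segEnd_eq_segStart_add] using hw i

lemma segStart_nonneg (hw : 0 ≤ w) (i : Fin n) : 0 ≤ segStart w σ i := by
  have := prefixSum_mono (fun j => hw (σ j)) (Nat.zero_le (σ.symm i))
  rwa [prefixSum_zero] at this

lemma segEnd_le_sum (hw : 0 ≤ w) (i : Fin n) : segEnd w σ i ≤ ∑ j, w j := by
  have := prefixSum_mono (fun j => hw (σ j)) (Nat.succ_le_of_lt (σ.symm i).isLt)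
  rwa [prefixSum_of_le _ le_rfl, Equiv.sum_comp σ w] at this

lemma segEnd_le_segStart_or (hw : 0 ≤ w) {i j : Fin n} (hij : i ≠ j) :
    segEnd w σ i ≤ segStart w σ j ∨ segEnd w σ j ≤ segStart w σ i := by
  rcases lt_or_gt_of_ne (σ.symm.injective.ne hij) with h | h
  · exact .inl (prefixSum_mono (fun k => hw (σ k)) (Nat.succ_le_of_lt h))
  · exact .inr (prefixSum_mono (fun k => hw (σ k)) (Nat.succ_le_of_lt h))

lemma exists_segStart_le_lt (σ : Equiv.Perm (Fin n)) {t : ℝ} (ht0 : 0 ≤ t)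
    (ht : t < ∑ j, w j) : ∃ i, segStart w σ i ≤ t ∧ t < segEnd w σ i := by
  rw [← Equiv.sum_comp σ w, ← Function.comp_def, ← prefixSum_of_le (w ∘ σ) le_rfl] at ht
  obtain ⟨k, hk, hle, hlt⟩ :=
    exists_apply_le_lt_apply_succ (prefixSum (w ∘ σ)) (by simpa using ht0) ht
  exact ⟨σ ⟨k, hk⟩, by simpa [segStart] using hle, by simpa [segEnd] using hlt⟩

lemma sum_apply_segEnd_sub_apply_segStart (w : Fin n → ℝ) (σ : Equiv.Perm (Fin n))
    (F : ℝ → ℝ) : ∑ i, (F (segEnd w σ i) - F (segStart w σ i)) = F (∑ i, w i) - F 0 := by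
  rw [← Equiv.sum_comp σ]
  simp only [segEnd, segStart, Equiv.symm_apply_apply]
  rw [Fin.sum_univ_eq_sum_range
      (fun k => F (prefixSum (w ∘ σ) (k + 1)) - F (prefixSum (w ∘ σ) k)),
    sum_range_sub (fun k => F (prefixSum (w ∘ σ) k)), prefixSum_zero, prefixSum_of_le _ le_rfl,
    Function.comp_def, Equiv.sum_comp σ w]

lemma sum_overlap_segments (hw : 0 ≤ w) (σ : Equiv.Perm (Fin n)) {l h : ℝ} (hl : 0 ≤ l)
    (hlh : l ≤ h) (hh : h ≤ ∑ j, w j) :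
    ∑ j, max 0 (min h (segEnd w σ j) - max l (segStart w σ j)) = h - l := by
  have hseg : ∀ j, segStart w σ j ≤ segEnd w σ j := fun j => by
    simpa [segEnd_eq_segStart_add] using hw j
  simp only [max_zero_min_sub_max hlh (hseg _)]
  rw [sum_apply_segEnd_sub_apply_segStart w σ fun t => max l (min h t), min_eq_left hh,
    max_eq_right hlh, min_eq_right (hl.trans hlh), max_eq_left hl]

end Segments

def NoCommonCut {a b : ℕ} (x : Fin a → ℝ) (y : Fin b → ℝ) (σ : Equiv.Perm (Fin a))
    (τ : Equiv.Perm (Fin b)) : Prop :=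
  ∀ i j, segStart x σ i = segStart y τ j → segStart x σ i = 0

namespace SimpleGraph

variable {V α : Type*} {G : SimpleGraph V} [LinearOrder α] (key : V → α)

theorem isAcyclic_of_lower_neighbor_unique (hadj : ∀ ⦃u v⦄, G.Adj u v → key u ≠ key v)
    (huniq : ∀ ⦃v u w⦄, G.Adj v u → G.Adj v w → key u < key v → key w < key v → u = w) :
    G.IsAcyclic := by
  classical
  intro v c hc
  obtain ⟨m, hm, hmax⟩ := c.support.toFinset.exists_max_image key ⟨v, by simp⟩
  rw [List.mem_toFinset] at hm
  obtain ⟨u, w, huw, hnbr⟩ := Set.ncard_eq_two.1 (hc.ncard_neighborSet_toSubgraph_eq_two hm)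
  have hlower : ∀ z ∈ c.toSubgraph.neighborSet m, G.Adj m z ∧ key z < key m := fun z hz => by
    have hmz := c.toSubgraph.adj_sub hz
    have hz : z ∈ c.support := c.mem_verts_toSubgraph.1 (c.toSubgraph.edge_vert hz.symm)
    exact ⟨hmz, (hmax z (List.mem_toFinset.2 hz)).lt_of_ne (hadj hmz).symm⟩
  have hu := hlower u (by simp [hnbr])
  have hw := hlower w (by simp [hnbr])
  exact huw (huniq hu.1 hw.1 hu.2 hw.2)

theorem connected_of_exists_lower_neighbor [Finite V] (r : V)
    (h : ∀ v ≠ r, ∃ u, G.Adj v u ∧ key u < key v) : G.Connected := by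
  suffices hr : ∀ v, G.Reachable v r from
    (connected_iff G).2 ⟨fun v w => (hr v).trans (hr w).symm, ⟨r⟩⟩
  by_contra! hne
  obtain ⟨v, hv, hmin⟩ := Set.exists_min_image {v | ¬G.Reachable v r} key (Set.toFinite _) hne
  obtain ⟨u, hvu, hu⟩ := h v (by rintro rfl; exact hv (Reachable.refl _))
  exact hv (hvu.reachable.trans (by_contra fun hu' => (hmin u hu').not_gt hu))

lemma preconnected_induce_erase [DecidableEq V] {s : Finset V}
    (hs : (G.induce (s : Set V)).Preconnected) {ℓ u : V} (hℓ : ℓ ∈ s)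
    (hleaf : ∀ z ∈ s, G.Adj ℓ z → z = u) : (G.induce (s.erase ℓ : Set V)).Preconnected := by
  have := hs.induce_of_degree_eq_one (s := {⟨ℓ, hℓ⟩}ᶜ) (by
    intro z hz
    rw [Set.notMem_compl_iff, Set.mem_singleton_iff] at hz
    subst hz
    intro p hp q hq
    exact Subtype.ext ((hleaf p p.2 hp).trans (hleaf q q.2 hq).symm))
  refine this.map ⟨fun z => ⟨z.1.1, mem_erase.2 ⟨fun h => z.2 (Subtype.ext h), z.1.2⟩⟩, id⟩
    fun z => ⟨⟨⟨z.1, mem_of_mem_erase z.2⟩, fun h => ?_⟩, rfl⟩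
  exact (mem_erase.1 z.2).1 (congrArg Subtype.val h)

end SimpleGraph

section LeafRemoval

variable {V : Type} {G : SimpleGraph V} {ω : V → V → ℝ} {st st' : Finset V × (V → ℝ)}

def LeafRemovalInvariant (G : SimpleGraph V) (ω : V → V → ℝ) (st : Finset V × (V → ℝ)) :
    Prop :=
  (G.induce (st.1 : Set V)).Preconnected ∧ ∀ v ∈ st.1, st.2 v = ∑ u ∈ st.1, ω v u

lemma LeafStep.card_add_one [DecidableEq V] (h : LeafStep G st st') :
    st'.1.card + 1 = st.1.card := by
  obtain ⟨ℓ, hℓ, -, -, -, -, -, hs, -⟩ := h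
  rw [hs, card_erase_add_one hℓ]

lemma LeafRemovalInvariant.leafStep [DecidableEq V] (hsymm : ∀ v u, ω v u = ω u v)
    (hω : ∀ v u, ¬G.Adj v u → ω v u = 0) (h : LeafRemovalInvariant G ω st)
    (hstep : LeafStep G st st') : LeafRemovalInvariant G ω st' := by
  obtain ⟨ℓ, hℓ, u, hu, -, -, hleaf, hs, hw⟩ := hstep
  refine ⟨hs ▸ G.preconnected_induce_erase h.1 hℓ hleaf, fun v hv => ?_⟩
  rw [hs] at hv ⊢
  obtain ⟨hvℓ, hvs⟩ := mem_erase.1 hv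
  rw [hw, sum_erase_eq_sub hℓ, ← h.2 v hvs]
  by_cases hvu : v = u
  · subst hvu
    rw [Function.update_self, h.2 ℓ hℓ, hsymm,
      sum_eq_single_of_mem v hu fun z hz hzv => hω _ _ fun hadj => hzv (hleaf z hz hadj)]
  · rw [Function.update_of_ne hvu, hω v ℓ fun hadj => hvu (hleaf v hvs hadj.symm), sub_zero]

lemma ReachN.leafRemovalInvariant_and_card [DecidableEq V] (hsymm : ∀ v u, ω v u = ω u v)
    (hω : ∀ v u, ¬G.Adj v u → ω v u = 0) {n : ℕ} (hr : ReachN G n st st')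
    (h : LeafRemovalInvariant G ω st) :
    LeafRemovalInvariant G ω st' ∧ st'.1.card + n = st.1.card := by
  induction n generalizing st with
  | zero => exact ⟨(show st' = st from hr) ▸ h, by rw [show st' = st from hr, add_zero]⟩
  | succ n ih =>
    obtain ⟨m, hm, hr⟩ := hr
    obtain ⟨h', hcard⟩ := ih hr (h.leafStep hsymm hω hm)
    exact ⟨h', by rw [← hm.card_add_one]; omega⟩

lemma LeafRemovalInvariant.snd_pos (hω0 : ∀ v u, 0 ≤ ω v u) (hpos : ∀ v u, G.Adj v u → 0 < ω v u)
    (h : LeafRemovalInvariant G ω st) (hcard : 1 < st.1.card) {v : V} (hv : v ∈ st.1) :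
    0 < st.2 v := by
  obtain ⟨u, hu, huv⟩ := exists_mem_ne hcard v
  obtain ⟨p⟩ := h.1 ⟨v, hv⟩ ⟨u, hu⟩
  have hadj :=
    p.adj_snd (SimpleGraph.Walk.not_nil_of_ne fun h => huv (congrArg Subtype.val h).symm)
  rw [h.2 v hv]
  exact sum_pos' (fun z _ => hω0 v z) ⟨p.snd.1, p.snd.2, hpos _ _ hadj⟩

theorem ReachN.snd_pos [Fintype V] [DecidableEq V] {w : V → ℝ} {n : ℕ}
    (hr : ReachN G n (univ, w) st) (hconn : G.Connected) (hsymm : ∀ v u, ω v u = ω u v)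
    (hω0 : ∀ v u, 0 ≤ ω v u) (hadj : ∀ v u, G.Adj v u ↔ 0 < ω v u)
    (hw : ∀ v, w v = ∑ u, ω v u) (hn : n + 2 ≤ Fintype.card V) {v : V} (hv : v ∈ st.1) :
    0 < st.2 v := by
  have hinit : LeafRemovalInvariant G ω (univ, w) :=
    ⟨hconn.preconnected.map ⟨fun v => ⟨v, by simp⟩, id⟩ fun z => ⟨z.1, rfl⟩, fun v _ => hw v⟩
  obtain ⟨h, hcard⟩ := hr.leafRemovalInvariant_and_card hsymm
    (fun v u huv => ((hω0 v u).lt_or_eq.resolve_left ((hadj v u).not.1 huv)).symm) hinit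
  exact h.snd_pos hω0 (fun v u => (hadj v u).1) (by rw [card_univ] at hcard; omega) hv

end LeafRemoval

namespace Overlap

variable {a b : ℕ} (x : Fin a → ℝ) (y : Fin b → ℝ) (σ : Equiv.Perm (Fin a))
  (τ : Equiv.Perm (Fin b))

def lo : Fin a ⊕ Fin b → ℝ := Sum.elim (segStart x σ) (segStart y τ)

def hi : Fin a ⊕ Fin b → ℝ := Sum.elim (segEnd x σ) (segEnd y τ)

noncomputable def weight (v u : Fin a ⊕ Fin b) : ℝ :=
  if v.isLeft = u.isLeft then 0
  else max 0 (min (hi x y σ τ v) (hi x y σ τ u) - max (lo x y σ τ v) (lo x y σ τ u))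

lemma weight_comm (v u : Fin a ⊕ Fin b) : weight x y σ τ v u = weight x y σ τ u v := by
  simp only [weight, eq_comm (a := v.isLeft), min_comm, max_comm]

lemma weight_nonneg (v u : Fin a ⊕ Fin b) : 0 ≤ weight x y σ τ v u := by
  unfold weight
  split_ifs
  exacts [le_rfl, le_max_left _ _]

noncomputable def graph : SimpleGraph (Fin a ⊕ Fin b) where
  Adj v u := 0 < weight x y σ τ v u
  symm.symm v u h := by rwa [weight_comm]
  loopless.irrefl v h := by simp [weight] at h

/-- The two segments starting at `0` are the only adjacent vertices with equal `lo`; the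
second component breaks that tie. -/
def key (v : Fin a ⊕ Fin b) : ℝ ×ₗ Bool := toLex (lo x y σ τ v, !v.isLeft)

variable {x y σ τ} (hx : ∀ i, 0 < x i) (hy : ∀ j, 0 < y j)

include hx hy in
lemma lo_lt_hi : ∀ v, lo x y σ τ v < hi x y σ τ v
  | .inl i => segStart_lt_segEnd hx i
  | .inr j => segStart_lt_segEnd hy j

include hx hy in
lemma lo_nonneg : ∀ v, 0 ≤ lo x y σ τ v
  | .inl i => segStart_nonneg (fun i => (hx i).le) i
  | .inr j => segStart_nonneg (fun j => (hy j).le) j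

include hx hy in
lemma hi_le_sum (hsum : ∑ i, x i = ∑ j, y j) : ∀ v, hi x y σ τ v ≤ ∑ i, x i
  | .inl i => segEnd_le_sum (fun i => (hx i).le) i
  | .inr j => hsum ▸ segEnd_le_sum (fun j => (hy j).le) j

include hx hy in
lemma hi_le_lo_or_hi_le_lo {v u : Fin a ⊕ Fin b} (hside : v.isLeft = u.isLeft) (hne : v ≠ u) :
    hi x y σ τ v ≤ lo x y σ τ u ∨ hi x y σ τ u ≤ lo x y σ τ v := by
  cases v <;> cases u <;> simp only [Sum.isLeft_inl, Sum.isLeft_inr, reduceCtorEq] at hside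
  · exact segEnd_le_segStart_or (fun i => (hx i).le) fun h => hne (h ▸ rfl)
  · exact segEnd_le_segStart_or (fun j => (hy j).le) fun h => hne (h ▸ rfl)

lemma exists_lo_le_lt (hsum : ∑ i, x i = ∑ j, y j) (s : Bool) {t : ℝ} (ht0 : 0 ≤ t)
    (ht : t < ∑ i, x i) : ∃ u, u.isLeft = s ∧ lo x y σ τ u ≤ t ∧ t < hi x y σ τ u := by
  cases s
  · obtain ⟨j, hj⟩ := exists_segStart_le_lt τ ht0 (hsum ▸ ht)
    exact ⟨.inr j, rfl, hj⟩
  · obtain ⟨i, hi⟩ := exists_segStart_le_lt σ ht0 ht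
    exact ⟨.inl i, rfl, hi⟩

lemma lo_eq_zero_of_lo_eq (hcut : NoCommonCut x y σ τ) {v u : Fin a ⊕ Fin b}
    (hside : v.isLeft ≠ u.isLeft) (h : lo x y σ τ u = lo x y σ τ v) : lo x y σ τ v = 0 := by
  cases v <;> cases u <;> simp only [Sum.isLeft_inl, Sum.isLeft_inr, ne_eq, not_true_eq_false,
    Bool.true_eq_false, Bool.false_eq_true, not_false_eq_true] at hside
  · exact hcut _ _ h.symm
  · exact h ▸ hcut _ _ h

include hx hy in
lemma graph_adj_iff {v u : Fin a ⊕ Fin b} : (graph x y σ τ).Adj v u ↔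
    v.isLeft ≠ u.isLeft ∧ lo x y σ τ v < hi x y σ τ u ∧ lo x y σ τ u < hi x y σ τ v := by
  have := lo_lt_hi hx hy (σ := σ) (τ := τ) v
  have := lo_lt_hi hx hy (σ := σ) (τ := τ) u
  by_cases hs : v.isLeft = u.isLeft
  · simp [graph, weight, hs]
  · simp only [graph, weight, hs, if_false, lt_max_iff, lt_self_iff_false, false_or, sub_pos,
      max_lt_iff, lt_min_iff, ne_eq, not_false_eq_true, true_and]
    tauto

include hx hy in
lemma sum_weight (hsum : ∑ i, x i = ∑ j, y j) (v : Fin a ⊕ Fin b) :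
    ∑ u, weight x y σ τ v u = Sum.elim x y v := by
  rw [Fintype.sum_sum_type]
  cases v with
  | inl i =>
    simp only [weight, lo, hi, Sum.isLeft_inl, Sum.isLeft_inr, Sum.elim_inl, Sum.elim_inr,
      if_true, sum_const_zero, zero_add, Bool.true_eq_false, if_false]
    rw [sum_overlap_segments (fun j => (hy j).le) τ (segStart_nonneg (fun i => (hx i).le) i)
      (segStart_lt_segEnd hx i).le (hsum ▸ segEnd_le_sum (fun i => (hx i).le) i),
      segEnd_eq_segStart_add, add_sub_cancel_left]
  | inr j =>
    simp only [weight, lo, hi, Sum.isLeft_inl, Sum.isLeft_inr, Sum.elim_inl, Sum.elim_inr,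
      if_true, sum_const_zero, add_zero, Bool.false_eq_true, if_false]
    rw [sum_overlap_segments (fun i => (hx i).le) σ (segStart_nonneg (fun j => (hy j).le) j)
      (segStart_lt_segEnd hy j).le (hsum ▸ segEnd_le_sum (fun j => (hy j).le) j),
      segEnd_eq_segStart_add, add_sub_cancel_left]

lemma lo_le_of_key_lt {v u : Fin a ⊕ Fin b} (h : key x y σ τ u < key x y σ τ v) :
    lo x y σ τ u ≤ lo x y σ τ v := by
  rcases Prod.Lex.toLex_lt_toLex.1 h with h | ⟨h, -⟩
  exacts [h.le, h.le]

include hx hy in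
lemma graph_isAcyclic : (graph x y σ τ).IsAcyclic := by
  refine SimpleGraph.isAcyclic_of_lower_neighbor_unique (key x y σ τ)
    (fun u v huv h => ((graph_adj_iff hx hy).1 huv).1 ?_) fun v u w hvu hvw hu hw => ?_
  · exact Bool.not_inj (congrArg (fun p => (ofLex p).2) h)
  obtain ⟨hvu', hvu, -⟩ := (graph_adj_iff hx hy).1 hvu
  obtain ⟨hvw', hvw, -⟩ := (graph_adj_iff hx hy).1 hvw
  by_contra hne
  have hside : u.isLeft = w.isLeft := by
    revert hvu' hvw'
    cases v.isLeft <;> cases u.isLeft <;> cases w.isLeft <;> simp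
  rcases hi_le_lo_or_hi_le_lo hx hy hside hne with h | h
  · linarith [lo_le_of_key_lt hw]
  · linarith [lo_le_of_key_lt hu]

include hx hy in
lemma graph_connected [Nonempty (Fin a ⊕ Fin b)] (hsum : ∑ i, x i = ∑ j, y j)
    (hcut : NoCommonCut x y σ τ) : (graph x y σ τ).Connected := by
  have hS : 0 < ∑ i, x i := by
    obtain ⟨v⟩ := ‹Nonempty (Fin a ⊕ Fin b)›
    cases v with
    | inl i => exact sum_pos (fun i _ => hx i) ⟨i, mem_univ i⟩
    | inr j => exact hsum ▸ sum_pos (fun j _ => hy j) ⟨j, mem_univ j⟩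
  obtain ⟨r, hr, hr0, -⟩ := exists_lo_le_lt (σ := σ) (τ := τ) hsum true le_rfl hS
  replace hr0 := le_antisymm hr0 (lo_nonneg hx hy r)
  have hlr := lo_lt_hi hx hy (σ := σ) (τ := τ) r
  refine SimpleGraph.connected_of_exists_lower_neighbor (key x y σ τ) r fun v hvr => ?_
  have hv := lo_lt_hi hx hy (σ := σ) (τ := τ) v
  rcases (lo_nonneg hx hy v).eq_or_lt with hv0 | hv0
  · have hvr' : v.isLeft = false := by
      by_contra hvl
      rcases hi_le_lo_or_hi_le_lo hx hy ((by simpa using hvl : v.isLeft = true).trans hr.symm)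
        hvr with h | h <;> linarith
    refine ⟨r, (graph_adj_iff hx hy).2 ⟨by simp [hvr', hr], by linarith, by linarith⟩, ?_⟩
    exact Prod.Lex.toLex_lt_toLex.2 (.inr ⟨by rw [hr0, hv0], by simp [hvr', hr]⟩)
  · obtain ⟨u, hu, hlo, hhi⟩ := exists_lo_le_lt (σ := σ) (τ := τ) hsum (!v.isLeft) hv0.le
      (hv.trans_le (hi_le_sum hx hy hsum v))
    have hside : v.isLeft ≠ u.isLeft := by
      rw [hu]
      cases v.isLeft <;> decide
    have hlt : lo x y σ τ u < lo x y σ τ v :=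
      hlo.lt_of_ne fun h => hv0.ne' (lo_eq_zero_of_lo_eq hcut hside h)
    exact ⟨u, (graph_adj_iff hx hy).2 ⟨hside, hhi, hlt.trans hv⟩,
      Prod.Lex.toLex_lt_toLex.2 (.inl hlt)⟩

include hx hy in
theorem isConnectionGraph_graph [Nonempty (Fin a ⊕ Fin b)] (hsum : ∑ i, x i = ∑ j, y j)
    (hcut : NoCommonCut x y σ τ) : IsConnectionGraph (graph x y σ τ) x y := by
  have hconn := graph_connected hx hy hsum hcut
  refine ⟨⟨hconn, graph_isAcyclic hx hy⟩, fun i j h => ((graph_adj_iff hx hy).1 h).1 rfl,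
    fun i j h => ((graph_adj_iff hx hy).1 h).1 rfl, hx, hy, hsum,
    fun n hn1 hn2 st hr v hv => ?_⟩
  exact hr.snd_pos hconn (weight_comm x y σ τ) (weight_nonneg x y σ τ) (fun _ _ => Iff.rfl)
    (fun v => (sum_weight hx hy hsum v).symm)
    (by simp only [Fintype.card_sum, Fintype.card_fin]; omega) hv

end Overlap

lemma Submodule.exists_dual_eq_zero_ne_zero {K V : Type*} [Field K] [AddCommGroup V]
    [Module K V] {r s : V} (h : r ∉ K ∙ s) : ∃ f : Module.Dual K V, f s = 0 ∧ f r ≠ 0 := by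
  obtain ⟨f, hfr, hf⟩ := exists_dual_map_eq_bot_of_notMem h inferInstance
  have : f s ∈ (K ∙ s).map f := mem_map_of_mem (mem_span_singleton_self s)
  rw [hf, mem_bot] at this
  exact ⟨f, this, hfr⟩

lemma exists_rat_mul_eq_of_mem_span_singleton {r s t : ℝ} (hr : r ∈ ℚ ∙ t) (hs : s ∈ ℚ ∙ t)
    (hs0 : s ≠ 0) : ∃ q : ℚ, r = q * s := by
  obtain ⟨p, rfl⟩ := Submodule.mem_span_singleton.1 hr
  obtain ⟨q, rfl⟩ := Submodule.mem_span_singleton.1 hs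
  rw [Rat.smul_def] at hs0 ⊢
  have hq : (q : ℝ) ≠ 0 := left_ne_zero_of_mul hs0
  refine ⟨p / q, ?_⟩
  rw [Rat.smul_def, Rat.cast_div]
  field_simp

theorem exists_perm_noCommonCut {a b : ℕ} {x : Fin a → ℝ} {y : Fin b → ℝ}
    (hsum : ∑ i, x i = ∑ j, y j) (f : Module.Dual ℚ ℝ) (hfS : f (∑ i, x i) = 0)
    (hf : ∃ v, f (Sum.elim x y v) ≠ 0) :
    ∃ (σ : Equiv.Perm (Fin a)) (τ : Equiv.Perm (Fin b)), NoCommonCut x y σ τ := by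
  set σ := Tuple.sort fun i => -f (x i)
  set τ := Tuple.sort fun j => f (y j)
  set rx : Fin a → ℚ := fun k => f (x (σ k))
  set ry : Fin b → ℚ := fun k => -f (y (τ k))
  have hrx : Antitone rx := fun k l hkl =>
    neg_le_neg_iff.1 (Tuple.monotone_sort (fun i => -f (x i)) hkl)
  have hry : Antitone ry := fun k l hkl =>
    neg_le_neg_iff.2 (Tuple.monotone_sort (fun j => f (y j)) hkl)
  have hsx : ∑ k, rx k = 0 := by
    rw [Equiv.sum_comp σ fun i => f (x i), ← map_sum, hfS]
  have hsy : ∑ k, ry k = 0 := by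
    rw [sum_neg_distrib, Equiv.sum_comp τ fun j => f (y j), ← map_sum, ← hsum, hfS, neg_zero]
  refine ⟨σ, τ, fun i j hij => by_contra fun hne => ?_⟩
  have hfi : f (segStart x σ i) = prefixSum rx (σ.symm i) := map_prefixSum _ f _
  have hfj : f (segStart y τ j) = -prefixSum ry (τ.symm j) := by
    rw [← prefixSum_neg, segStart, map_prefixSum]
    congr 1
    ext k
    simp [ry]
  have hi0 : 0 < (σ.symm i : ℕ) := Nat.pos_of_ne_zero fun h => hne (by simp [segStart, h])
  have hj0 : 0 < (τ.symm j : ℕ) :=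
    Nat.pos_of_ne_zero fun h => hne (by rw [hij]; simp [segStart, h])
  -- `f` is `≥ 0` at every `x`-cut and `≤ 0` at every `y`-cut, so both vanish at the common cut
  have hpx := prefixSum_nonneg_of_antitone hrx hsx (σ.symm i)
  have hpy := prefixSum_nonneg_of_antitone hry hsy (τ.symm j)
  have heq : prefixSum rx (σ.symm i) = -prefixSum ry (τ.symm j) := by rw [← hfi, ← hfj, hij]
  have hrx0 := eq_zero_of_prefixSum_eq_zero hrx hsx hi0 (σ.symm i).isLt (by linarith)
  have hry0 := eq_zero_of_prefixSum_eq_zero hry hsy hj0 (τ.symm j).isLt (by linarith)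
  obtain ⟨v, hv⟩ := hf
  apply hv
  cases v with
  | inl i' => simpa [rx] using congrFun hrx0 (σ.symm i')
  | inr j' => simpa [ry] using congrFun hry0 (τ.symm j')

/-- If `x₁,…,x_a` and `y₁,…,y_b` are strictly positive reals with equal sums and there is
no connection graph with the `x_i` on one side and the `y_j` on the other, then all these
numbers are pairwise commensurable: each ratio of two of them is rational. -/
theorem commensurable_of_no_connection_graph (a b : ℕ) (x : Fin a → ℝ) (y : Fin b → ℝ)
    (hx : ∀ i, 0 < x i) (hy : ∀ j, 0 < y j)
    (hsum : ∑ i, x i = ∑ j, y j)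
    (hno : ¬ ∃ G : SimpleGraph (Fin a ⊕ Fin b), IsConnectionGraph G x y) :
    ∀ u v : Fin a ⊕ Fin b, ∃ q : ℚ, Sum.elim x y u = (q : ℝ) * Sum.elim x y v := by
  suffices h : ∀ v, Sum.elim x y v ∈ ℚ ∙ ∑ i, x i from fun u v =>
    exists_rat_mul_eq_of_mem_span_singleton (h u) (h v)
      (by cases v; exacts [(hx _).ne', (hy _).ne'])
  by_contra! ⟨w, hw⟩
  obtain ⟨f, hfS, hfw⟩ := Submodule.exists_dual_eq_zero_ne_zero hw
  obtain ⟨σ, τ, hcut⟩ := exists_perm_noCommonCut hsum f hfS ⟨w, hfw⟩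
  have : Nonempty (Fin a ⊕ Fin b) := ⟨w⟩
  exact hno ⟨_, Overlap.isConnectionGraph_graph hx hy hsum hcut⟩
end
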